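/- Let a > b > 0 and Z_i^n as above (Z_1^n with parameter 1 − ρ_1^{(n)}, ρ_1^{(n)} = (1 − an^{−3/2} + bn^{−1/2})(1 − an^{−3/2})^{n−1}; Z_i^n with parameter 1 − (1 − an^{−3/2})^{n−i+1} for i ≥ 2; all independent). Then E[(1/n)·Σ_{i=1}^n (n−i+1)·Z_i^n] / (n^{3/2}/a) → 1 as n → ∞. -/

import Mathlib

open Filter Finset MeasureTheory
open scoped ENNReal Topology

/-- Traffic intensities of the Jackson network representing the gaps of the
`n`-server marginal-JSQ system with pauses. -/
noncomputable def jacksonRho (a b : ℝ) (n i : ℕ) : ℝ :=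
  if i = 1 then
    (1 - a / (n : ℝ) ^ ((3 : ℝ) / 2) + b / Real.sqrt n)
      * (1 - a / (n : ℝ) ^ ((3 : ℝ) / 2)) ^ (n - 1)
  else (1 - a / (n : ℝ) ^ ((3 : ℝ) / 2)) ^ (n - i + 1)

/-!
`Z_i^n` is geometric with mean `ρ_i / (1 - ρ_i)`. For `i ≥ 2`, `ρ_i = (1 - ε)^k` with
`ε = a n^{-3/2}` and `k = n - i + 1 ≤ n`, and Bernoulli's inequalities
`1 - kε ≤ (1 - ε)^k ≤ 1 / (1 + kε)` put `k ρ_i / (1 - ρ_i)` between `(1 - kε) / ε` and `1 / ε`.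
Since `kε ≤ nε = a / √n → 0`, the `n - 1` stations `i ≥ 2` contribute `~ (n - 1) / ε` to the
weighted sum, which gives the limit. For the first station the same inequality gives
`1 - ρ_1 ≳ ((a - b) n - a) n^{-3/2}`, which is where `b < a` enters: its contribution
`n ρ_1 / (1 - ρ_1) = O(n^{3/2})` is negligible against `n / ε = n^{5/2} / a`.
-/

section TailSum

variable {Ω : Type*} [MeasurableSpace Ω] {μ : Measure Ω} {X : Ω → ℕ}

theorem lintegral_natCast_eq_tsum_measure_lt (hX : Measurable X) :
    ∫⁻ ω, (X ω : ℝ≥0∞) ∂μ = ∑' m : ℕ, μ {ω | m < X ω} := by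
  have hset (m : ℕ) : MeasurableSet {ω | m < X ω} := hX measurableSet_Ioi
  have hX_eq (ω : Ω) : (X ω : ℝ≥0∞) = ∑' m : ℕ, {ω | m < X ω}.indicator (fun _ => 1) ω := by
    rw [tsum_eq_sum (s := range (X ω)) fun m hm => by simpa using hm]
    simp [Set.indicator_apply, filter_true_of_mem fun m hm => mem_range.1 hm]
  simp_rw [hX_eq]
  rw [lintegral_tsum fun m => (measurable_const.indicator (hset m)).aemeasurable]
  exact tsum_congr fun m => lintegral_indicator_one (hset m)

variable {r : ℝ}

theorem lintegral_natCast_of_tail_eq_pow (hX : Measurable X) (hr0 : 0 ≤ r) (hr1 : r < 1)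
    (htail : ∀ m : ℕ, μ {ω | m ≤ X ω} = ENNReal.ofReal (r ^ m)) :
    ∫⁻ ω, (X ω : ℝ≥0∞) ∂μ = ENNReal.ofReal (r / (1 - r)) := by
  have hsum : Summable fun m : ℕ => r ^ (m + 1) :=
    (summable_nat_add_iff 1).2 (summable_geometric_of_lt_one hr0 hr1)
  simp_rw [lintegral_natCast_eq_tsum_measure_lt hX, Nat.lt_iff_add_one_le, htail,
    ← ENNReal.ofReal_tsum_of_nonneg (fun m => pow_nonneg hr0 _) hsum, pow_succ',
    tsum_mul_left, tsum_geometric_of_lt_one hr0 hr1, div_eq_mul_inv]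

theorem integrable_natCast_of_tail_eq_pow (hX : Measurable X) (hr0 : 0 ≤ r) (hr1 : r < 1)
    (htail : ∀ m : ℕ, μ {ω | m ≤ X ω} = ENNReal.ofReal (r ^ m)) :
    Integrable (fun ω => (X ω : ℝ)) μ := by
  have hXm : AEMeasurable (fun ω => (X ω : ℝ≥0∞)) μ := (measurable_from_nat.comp hX).aemeasurable
  simpa using integrable_toReal_of_lintegral_ne_top hXm
    (by rw [lintegral_natCast_of_tail_eq_pow hX hr0 hr1 htail]; exact ENNReal.ofReal_ne_top)

theorem integral_natCast_of_tail_eq_pow (hX : Measurable X) (hr0 : 0 ≤ r) (hr1 : r < 1)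
    (htail : ∀ m : ℕ, μ {ω | m ≤ X ω} = ENNReal.ofReal (r ^ m)) :
    ∫ ω, (X ω : ℝ) ∂μ = r / (1 - r) := by
  have hXm : AEMeasurable (fun ω => (X ω : ℝ≥0∞)) μ := (measurable_from_nat.comp hX).aemeasurable
  rw [← ENNReal.toReal_ofReal (div_nonneg hr0 (sub_nonneg.2 hr1.le)),
    ← lintegral_natCast_of_tail_eq_pow hX hr0 hr1 htail,
    ← integral_toReal hXm (ae_of_all _ fun ω => ENNReal.natCast_lt_top (X ω))]
  simp

theorem integral_sum_mul_natCast_of_tail_eq_pow {ι : Type*} (s : Finset ι) (c : ι → ℝ)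
    {X : ι → Ω → ℕ} {ρ : ι → ℝ} (hX : ∀ i ∈ s, Measurable (X i))
    (hρ : ∀ i ∈ s, ρ i ∈ Set.Ico 0 1)
    (htail : ∀ i ∈ s, ∀ m : ℕ, μ {ω | m ≤ X i ω} = ENNReal.ofReal (ρ i ^ m)) :
    ∫ ω, ∑ i ∈ s, c i * (X i ω : ℝ) ∂μ = ∑ i ∈ s, c i * (ρ i / (1 - ρ i)) := by
  rw [integral_finsetSum s fun i hi =>
    (integrable_natCast_of_tail_eq_pow (hX i hi) (hρ i hi).1 (hρ i hi).2 (htail i hi)).const_mul _]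
  refine sum_congr rfl fun i hi => ?_
  rw [integral_const_mul,
    integral_natCast_of_tail_eq_pow (hX i hi) (hρ i hi).1 (hρ i hi).2 (htail i hi)]

end TailSum

section OneSubPow

variable {ε : ℝ}

theorem one_sub_mul_le_one_sub_pow (hε : ε ≤ 2) (k : ℕ) : 1 - k * ε ≤ (1 - ε) ^ k := by
  simpa [sub_eq_add_neg] using one_add_mul_le_pow (by linarith : -2 ≤ -ε) k

theorem one_sub_pow_mul_one_add_mul_le_one (hε0 : 0 ≤ ε) (hε1 : ε ≤ 1) (k : ℕ) :
    (1 - ε) ^ k * (1 + k * ε) ≤ 1 :=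
  calc (1 - ε) ^ k * (1 + k * ε) ≤ (1 - ε) ^ k * (1 + ε) ^ k :=
        mul_le_mul_of_nonneg_left (one_add_mul_le_pow (by linarith) k) (pow_nonneg (by linarith) k)
    _ = (1 - ε ^ 2) ^ k := by rw [← mul_pow]; ring
    _ ≤ 1 := pow_le_one₀ (by nlinarith) (by nlinarith)

theorem one_sub_add_mul_pow_mul_le {β : ℝ} (hε0 : 0 ≤ ε) (hε1 : ε ≤ 1) (hβ : 0 ≤ β) (m : ℕ) :
    (1 - ε + β) * (1 - ε) ^ m * (1 + m * ε) ≤ 1 + β :=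
  calc (1 - ε + β) * (1 - ε) ^ m * (1 + m * ε) = (1 - ε + β) * ((1 - ε) ^ m * (1 + m * ε)) := by
        ring
    _ ≤ (1 - ε + β) * 1 :=
        mul_le_mul_of_nonneg_left (one_sub_pow_mul_one_add_mul_le_one hε0 hε1 m) (by linarith)
    _ ≤ 1 + β := by linarith

theorem one_sub_pow_mem_Ico (hε0 : 0 < ε) (hε1 : ε ≤ 1) {k : ℕ} (hk : k ≠ 0) :
    (1 - ε) ^ k ∈ Set.Ico 0 1 :=
  ⟨pow_nonneg (by linarith) k, pow_lt_one₀ (by linarith) (by linarith) hk⟩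

theorem mul_one_sub_pow_div_mem_Icc (hε0 : 0 < ε) (hε1 : ε ≤ 1) {k : ℕ} (hk : k ≠ 0) :
    k * ((1 - ε) ^ k / (1 - (1 - ε) ^ k)) ∈ Set.Icc ((1 - k * ε) / ε) (1 / ε) := by
  obtain ⟨ht0, ht1⟩ := one_sub_pow_mem_Ico hε0 hε1 hk
  have hlow := one_sub_mul_le_one_sub_pow (ε := ε) (by linarith) k
  have hup := one_sub_pow_mul_one_add_mul_le_one hε0.le hε1 k
  rw [← mul_div_assoc]
  constructor
  · rw [div_le_div_iff₀ hε0 (by linarith)]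
    nlinarith [mul_nonneg (sub_nonneg.2 hlow) (sub_nonneg.2 ht1.le),
      mul_nonneg ht0 (by linarith : 0 ≤ k * ε - (1 - (1 - ε) ^ k))]
  · rw [div_le_div_iff₀ (by linarith) hε0]
    nlinarith

theorem sum_Ioc_mul_one_sub_pow_div_mem_Icc (hε0 : 0 < ε) (hε1 : ε ≤ 1) {n : ℕ}
    (hn : 1 ≤ n) :
    ε * ∑ i ∈ Ioc 1 n, ((n : ℝ) - i + 1) * ((1 - ε) ^ (n - i + 1) / (1 - (1 - ε) ^ (n - i + 1)))
      ∈ Set.Icc ((n - 1) * (1 - n * ε)) (n - 1) := by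
  have hterm : ∀ i ∈ Ioc 1 n,
      ((n : ℝ) - i + 1) * ((1 - ε) ^ (n - i + 1) / (1 - (1 - ε) ^ (n - i + 1))) ∈
        Set.Icc ((1 - n * ε) / ε) (1 / ε) := by
    intro i hi
    obtain ⟨hi1, hin⟩ := mem_Ioc.1 hi
    have hcast : ((n - i + 1 : ℕ) : ℝ) = n - i + 1 := by push_cast [Nat.cast_sub hin]; ring
    have hk := mul_one_sub_pow_div_mem_Icc hε0 hε1 (k := n - i + 1) (by omega)
    rw [hcast] at hk
    refine ⟨le_trans ?_ hk.1, hk.2⟩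
    gcongr
    have : (1 : ℝ) < i := by exact_mod_cast hi1
    linarith
  have hcard : ((#(Ioc 1 n) : ℕ) : ℝ) = n - 1 := by simp [Nat.cast_sub hn]
  have hlow := card_nsmul_le_sum _ _ _ fun i hi => (hterm i hi).1
  have hup := sum_le_card_nsmul _ _ _ fun i hi => (hterm i hi).2
  rw [nsmul_eq_mul, hcard] at hlow hup
  have hn1 : (0 : ℝ) ≤ n - 1 := by
    have : (1 : ℝ) ≤ n := by exact_mod_cast hn
    linarith
  constructor
  · calc (n - 1) * (1 - n * ε) = ε * ((n - 1) * ((1 - n * ε) / ε)) := by field_simp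
      _ ≤ _ := by gcongr
  · calc _ ≤ ε * ((n - 1) * (1 / ε)) := by gcongr
      _ = n - 1 := by field_simp

end OneSubPow

theorem lt_one_of_mul_one_add_le {ρ x β : ℝ} (hρ : ρ * (1 + x) ≤ 1 + β)
    (hβ : 0 ≤ β) (hβx : β < x) : ρ < 1 := by
  by_contra! h
  nlinarith

theorem div_one_sub_le_of_mul_one_add_le {ρ x β : ℝ} (hρ : ρ * (1 + x) ≤ 1 + β)
    (hβ : 0 ≤ β) (hβx : β < x) : ρ / (1 - ρ) ≤ (1 + β) / (x - β) := by
  have := lt_one_of_mul_one_add_le hρ hβ hβx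
  rw [div_le_div_iff₀ (by linarith) (by linarith)]
  nlinarith

theorem rpow_three_halves {x : ℝ} (hx : 0 ≤ x) : x ^ ((3 : ℝ) / 2) = x * √x := by
  rw [Real.sqrt_eq_rpow, ← Real.rpow_one_add' hx (by norm_num)]
  norm_num

section Jackson

variable {a b : ℝ} {n : ℕ}

theorem jacksonRho_one : jacksonRho a b n 1 =
    (1 - a / (n : ℝ) ^ ((3 : ℝ) / 2) + b / √n) * (1 - a / (n : ℝ) ^ ((3 : ℝ) / 2)) ^ (n - 1) :=
  if_pos rfl

theorem jacksonRho_of_ne_one {i : ℕ} (hi : i ≠ 1) :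
    jacksonRho a b n i = (1 - a / (n : ℝ) ^ ((3 : ℝ) / 2)) ^ (n - i + 1) :=
  if_neg hi

theorem eventually_div_rpow_three_halves_le_one (a : ℝ) :
    ∀ᶠ n : ℕ in atTop, a / (n : ℝ) ^ ((3 : ℝ) / 2) ≤ 1 := by
  have hpow : Tendsto (fun n : ℕ => (n : ℝ) ^ ((3 : ℝ) / 2)) atTop atTop :=
    (tendsto_rpow_atTop (by norm_num)).comp tendsto_natCast_atTop_atTop
  filter_upwards [hpow.eventually_ge_atTop a, hpow.eventually_gt_atTop 0] with n hpa hp0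
  exact div_le_one_of_le₀ hpa hp0.le

theorem eventually_div_sqrt_lt_mul_div_rpow_three_halves (hab : b < a) :
    ∀ᶠ n : ℕ in atTop, b / √n < (n - 1 : ℕ) * (a / (n : ℝ) ^ ((3 : ℝ) / 2)) := by
  have hlin : Tendsto (fun n : ℕ => (a - b) * n) atTop atTop :=
    tendsto_natCast_atTop_atTop.const_mul_atTop (by linarith)
  filter_upwards [eventually_ge_atTop 1, hlin.eventually_gt_atTop a] with n hn hna
  have hn0 : (0 : ℝ) < n := by exact_mod_cast hn
  have hs : 0 < √(n : ℝ) := Real.sqrt_pos.2 hn0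
  rw [rpow_three_halves hn0.le, Nat.cast_sub hn, Nat.cast_one, mul_div_assoc',
    div_lt_div_iff₀ hs (by positivity)]
  nlinarith

theorem jacksonRho_one_mul_le (hb : 0 ≤ b) (ha : 0 ≤ a)
    (hε : a / (n : ℝ) ^ ((3 : ℝ) / 2) ≤ 1) :
    jacksonRho a b n 1 * (1 + (n - 1 : ℕ) * (a / (n : ℝ) ^ ((3 : ℝ) / 2))) ≤ 1 + b / √n := by
  rw [jacksonRho_one]
  exact one_sub_add_mul_pow_mul_le (by positivity) hε (by positivity) _

theorem jacksonRho_mem_Ico (hb : 0 ≤ b) (ha : 0 < a) (hn : 1 ≤ n)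
    (hε : a / (n : ℝ) ^ ((3 : ℝ) / 2) ≤ 1)
    (hβ : b / √n < (n - 1 : ℕ) * (a / (n : ℝ) ^ ((3 : ℝ) / 2))) {i : ℕ} (hi : i ∈ Icc 1 n) :
    jacksonRho a b n i ∈ Set.Ico 0 1 := by
  have hε0 : 0 < a / (n : ℝ) ^ ((3 : ℝ) / 2) := by positivity
  obtain rfl | hi1 := eq_or_ne i 1
  · refine ⟨?_, lt_one_of_mul_one_add_le (jacksonRho_one_mul_le hb ha.le hε) (by positivity) hβ⟩
    rw [jacksonRho_one]
    exact mul_nonneg (by linarith [show 0 ≤ b / √n by positivity]) (pow_nonneg (by linarith) _)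
  · rw [jacksonRho_of_ne_one hi1]
    exact one_sub_pow_mem_Ico hε0 hε (by omega)

theorem mul_jacksonRho_one_div_le (hb : 0 ≤ b) (ha : 0 < a) (hn : 1 ≤ n)
    (hε : a / (n : ℝ) ^ ((3 : ℝ) / 2) ≤ 1)
    (hβ : b / √n < (n - 1 : ℕ) * (a / (n : ℝ) ^ ((3 : ℝ) / 2))) :
    a / (n : ℝ) ^ ((3 : ℝ) / 2) * (jacksonRho a b n 1 / (1 - jacksonRho a b n 1)) ≤
      a * (1 + b / √n) / ((a - b) * n - a) := by
  have hbound := div_one_sub_le_of_mul_one_add_le (jacksonRho_one_mul_le hb ha.le hε)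
    (by positivity) hβ
  refine (mul_le_mul_of_nonneg_left hbound (by positivity)).trans_eq ?_
  have hn0 : (0 : ℝ) < n := by exact_mod_cast hn
  have hs : 0 < √(n : ℝ) := Real.sqrt_pos.2 hn0
  have hD : (n - 1 : ℕ) * (a / (n : ℝ) ^ ((3 : ℝ) / 2)) - b / √n ≠ 0 := by linarith
  rw [rpow_three_halves hn0.le, Nat.cast_sub hn, Nat.cast_one] at hD ⊢
  have hD' : (a - b) * n - a ≠ 0 := by
    contrapose! hD
    field_simp
    linarith
  field_simp
  ring

theorem tendsto_mul_jacksonRho_one_div (hb : 0 ≤ b) (hab : b < a) :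
    Tendsto (fun n : ℕ => a / (n : ℝ) ^ ((3 : ℝ) / 2) *
      (jacksonRho a b n 1 / (1 - jacksonRho a b n 1))) atTop (𝓝 0) := by
  have ha : 0 < a := hb.trans_lt hab
  have hsqrt : Tendsto (fun n : ℕ => √(n : ℝ)) atTop atTop :=
    Real.tendsto_sqrt_atTop.comp tendsto_natCast_atTop_atTop
  have hden : Tendsto (fun n : ℕ => (a - b) * n - a) atTop atTop :=
    tendsto_atTop_add_const_right _ _ (tendsto_natCast_atTop_atTop.const_mul_atTop (by linarith))
  have hnum : Tendsto (fun n : ℕ => a * (1 + b / √n)) atTop (𝓝 (a * (1 + 0))) :=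
    tendsto_const_nhds.mul (tendsto_const_nhds.add (tendsto_const_nhds.div_atTop hsqrt))
  have hbound : Tendsto (fun n : ℕ => a * (1 + b / √n) / ((a - b) * n - a)) atTop (𝓝 0) :=
    hnum.div_atTop hden
  refine tendsto_of_tendsto_of_tendsto_of_le_of_le' tendsto_const_nhds hbound ?_ ?_ <;>
    filter_upwards [eventually_ge_atTop 1, eventually_div_rpow_three_halves_le_one a,
      eventually_div_sqrt_lt_mul_div_rpow_three_halves hab] with n hn hε hβ
  · obtain ⟨hρ0, hρ1⟩ := jacksonRho_mem_Ico hb ha hn hε hβ (left_mem_Icc.2 hn)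
    exact mul_nonneg (by positivity) (div_nonneg hρ0 (by linarith))
  · exact mul_jacksonRho_one_div_le hb ha hn hε hβ

theorem tendsto_mul_sum_Ioc_jacksonRho_div (ha : 0 < a) :
    Tendsto (fun n : ℕ => a / (n : ℝ) ^ ((3 : ℝ) / 2) *
      (∑ i ∈ Ioc 1 n, ((n : ℝ) - i + 1) * (jacksonRho a b n i / (1 - jacksonRho a b n i))) / n)
      atTop (𝓝 1) := by
  have hpred : Tendsto (fun n : ℕ => ((n : ℝ) - 1) / n) atTop (𝓝 1) := by
    have h := tendsto_const_nhds (x := (1 : ℝ)).sub (tendsto_one_div_atTop_nhds_zero_nat (𝕜 := ℝ))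
    rw [sub_zero] at h
    refine h.congr' ?_
    filter_upwards [eventually_ge_atTop 1] with n hn
    have : (n : ℝ) ≠ 0 := by positivity
    field_simp
  have hload : Tendsto (fun n : ℕ => (n : ℝ) * (a / (n : ℝ) ^ ((3 : ℝ) / 2))) atTop (𝓝 0) := by
    refine ((tendsto_const_nhds (x := a)).div_atTop
      (Real.tendsto_sqrt_atTop.comp tendsto_natCast_atTop_atTop)).congr' ?_
    filter_upwards [eventually_ge_atTop 1] with n hn
    have hn0 : (0 : ℝ) < n := by exact_mod_cast hn
    have : √(n : ℝ) ≠ 0 := (Real.sqrt_pos.2 hn0).ne'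
    rw [Function.comp_apply, rpow_three_halves hn0.le]
    field_simp
  have hlow : Tendsto (fun n : ℕ => ((n : ℝ) - 1) / n * (1 - n * (a / (n : ℝ) ^ ((3 : ℝ) / 2))))
      atTop (𝓝 1) := by
    simpa using hpred.mul (tendsto_const_nhds.sub hload)
  have hbounds : ∀ᶠ n : ℕ in atTop, a / (n : ℝ) ^ ((3 : ℝ) / 2) *
      ∑ i ∈ Ioc 1 n, ((n : ℝ) - i + 1) * (jacksonRho a b n i / (1 - jacksonRho a b n i)) ∈
      Set.Icc ((n - 1) * (1 - n * (a / (n : ℝ) ^ ((3 : ℝ) / 2)))) (n - 1) := by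
    filter_upwards [eventually_ge_atTop 1, eventually_div_rpow_three_halves_le_one a]
      with n hn hε
    rw [sum_congr rfl fun i hi => by rw [jacksonRho_of_ne_one (mem_Ioc.1 hi).1.ne']]
    exact sum_Ioc_mul_one_sub_pow_div_mem_Icc (by positivity) hε hn
  refine tendsto_of_tendsto_of_tendsto_of_le_of_le' hlow hpred ?_ ?_ <;>
    filter_upwards [hbounds] with n hn
  · rw [div_mul_eq_mul_div]
    exact div_le_div_of_nonneg_right hn.1 n.cast_nonneg
  · exact div_le_div_of_nonneg_right hn.2 n.cast_nonneg

end Jackson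

theorem expected_average_queue_length_asymptotics
    (a b : ℝ) (hb : 0 < b) (hab : b < a)
    {Ω : Type*} [MeasurableSpace Ω] (μ : Measure Ω)
    (Z : ℕ → ℕ → Ω → ℕ)
    (hmeas : ∀ n i, Measurable (Z n i))
    (htail : ∀ n, 1 ≤ n → ∀ i ∈ Icc 1 n, ∀ m : ℕ,
      μ {ω | m ≤ Z n i ω} = ENNReal.ofReal (jacksonRho a b n i ^ m)) :
    Tendsto
      (fun n : ℕ =>
        (∫ ω, (1 / (n : ℝ)) * ∑ i ∈ Icc 1 n, ((n : ℝ) - i + 1) * (Z n i ω : ℝ) ∂μ)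
          / ((n : ℝ) ^ ((3 : ℝ) / 2) / a))
      atTop (nhds 1) := by
  have ha : 0 < a := hb.trans hab
  have hlim := (tendsto_mul_jacksonRho_one_div hb.le hab).add
    (tendsto_mul_sum_Ioc_jacksonRho_div (b := b) ha)
  rw [zero_add] at hlim
  refine hlim.congr' ?_
  filter_upwards [eventually_ge_atTop 1, eventually_div_rpow_three_halves_le_one a,
    eventually_div_sqrt_lt_mul_div_rpow_three_halves hab] with n hn hε hβ
  rw [integral_const_mul, integral_sum_mul_natCast_of_tail_eq_pow _ _ (fun i _ => hmeas n i)
    (fun i hi => jacksonRho_mem_Ico hb.le ha hn hε hβ hi) (htail n hn),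
    ← add_sum_Ioc_eq_sum_Icc hn]
  have hn0 : (0 : ℝ) < n := by exact_mod_cast hn
  have hp : (n : ℝ) ^ ((3 : ℝ) / 2) ≠ 0 := by positivity
  field_simp
  ring
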